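/- arXiv:1606.05998 — 2 statements merged into one kernel-verified Lean document; each statement's English description precedes it below -/
import Mathlib

section
/- For n ≥ 1 and κ ∈ (0,8), let α⁺_{2n} = n(4n+8-κ)/κ, α⁺_{2n+1} = (n+1)(4(n+1)+4-κ)/κ, and define u₁(λ) = (4-κ/2)/κ + (1/κ)√(4κλ + (4-κ/2)²). Then α⁺_{2n+1} = u₁(α⁺_{2n}) + α⁺_{2n}. -/
/-! The discriminant of `κu² - (8-κ)u - 4λ` at `λ = α⁺_{2n}` is a perfect square,
`4κλ + (4 - κ/2)² = (4n + 4 - κ/2)²`, so `u₁(α⁺_{2n}) = (4n + 8 - κ)/κ` is rational in `n`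
and the recursion reduces to a polynomial identity. -/

noncomputable section

/-- `α⁺_{2x}`, extended to real `x`. -/
def evenArmExponent (κ x : ℝ) : ℝ := x * (4 * x + 8 - κ) / κ

/-- `α⁺_{2x+1}`, extended to real `x`. -/
def oddArmExponent (κ x : ℝ) : ℝ := (x + 1) * (4 * (x + 1) + 4 - κ) / κ

/-- `u₁(λ)`. -/
def oneSidedExponent (κ lam : ℝ) : ℝ :=
  (4 - κ / 2) / κ + 1 / κ * √(4 * κ * lam + (4 - κ / 2) ^ 2)

end

lemma discriminant_evenArmExponent {κ : ℝ} (hκ : κ ≠ 0) (x : ℝ) :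
    4 * κ * evenArmExponent κ x + (4 - κ / 2) ^ 2 = (4 * x + 4 - κ / 2) ^ 2 := by
  unfold evenArmExponent
  field_simp
  ring

lemma oddArmExponent_eq_oneSidedExponent_add {κ x : ℝ} (hκ : 0 < κ) (hx : κ ≤ 8 * x + 8) :
    oddArmExponent κ x = oneSidedExponent κ (evenArmExponent κ x) + evenArmExponent κ x := by
  rw [oneSidedExponent, discriminant_evenArmExponent hκ.ne', Real.sqrt_sq (by linarith)]
  unfold oddArmExponent evenArmExponent
  field_simp
  ring

theorem stmt_1_general (κ : ℝ) (hκ0 : 0 < κ) (hκ8 : κ < 8) (n : ℕ)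
    (α₂ α₃ : ℝ) (hα₂ : α₂ = n * (4 * n + 8 - κ) / κ)
    (hα₃ : α₃ = (n + 1) * (4 * (n + 1) + 4 - κ) / κ)
    (u₁ : ℝ → ℝ)
    (hu₁ : ∀ lam : ℝ, u₁ lam = (4 - κ / 2) / κ + (1 / κ) * Real.sqrt (4 * κ * lam + (4 - κ / 2) ^ 2)) :
    α₃ = u₁ α₂ + α₂ := by
  have hn : (0 : ℝ) ≤ n := n.cast_nonneg
  rw [hα₃, hu₁, hα₂]
  exact oddArmExponent_eq_oneSidedExponent_add hκ0 (by linarith)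

/-- Boundary arm exponent recursion: `α⁺_{2n+1} = u₁(α⁺_{2n}) + α⁺_{2n}` for `κ ∈ (0,8)`. -/
theorem stmt_1 (κ : ℝ) (hκ0 : 0 < κ) (hκ8 : κ < 8) (n : ℕ) (hn : 1 ≤ n)
    (α₂ α₃ : ℝ) (hα₂ : α₂ = n * (4 * n + 8 - κ) / κ)
    (hα₃ : α₃ = (n + 1) * (4 * (n + 1) + 4 - κ) / κ)
    (u₁ : ℝ → ℝ)
    (hu₁ : ∀ lam : ℝ, u₁ lam = (4 - κ / 2) / κ + (1 / κ) * Real.sqrt (4 * κ * lam + (4 - κ / 2) ^ 2)) :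
    α₃ = u₁ α₂ + α₂ :=
  stmt_1_general κ hκ0 hκ8 n α₂ α₃ hα₂ hα₃ u₁ hu₁
end

section
/- For κ > 0 and real numbers λ, b with 4b ≥ (λ-b)(κλ - κb + 4 - κ), condition (4b ≥ (λ-b)(κ(λ-b)+4-κ)) implies the condition κλ - κu₁(λ) + 8 - 2κ < κb ≤ κλ + κu₁(λ), where u₁(λ) = ((4-κ/2)+√(4κλ+(4-κ/2)²))/κ and λ ≥ 0. Moreover under the same hypothesis β := u₁(λ) + λ - b ≥ 0. -/
/-!
Put `x = λ - b`. The hypothesis is the quadratic inequality `κx² + (8 - κ)x ≤ 4λ`, and completing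
the square turns it into `|κx + (4 - κ/2)| ≤ √(4κλ + (4 - κ/2)²) = κu₁(λ) - (4 - κ/2)`. The two
one-sided bounds this gives are the two bounds on `κb` (the strict one with room `κ` to spare), and
the lower one also reads `κ(u₁(λ) + x) ≥ 0`.
-/

theorem abs_mul_add_le_sqrt_of_quadratic_le {a q c x : ℝ} (ha : 0 < a)
    (h : a * x ^ 2 + 2 * q * x ≤ c) : |a * x + q| ≤ √(a * c + q ^ 2) := by
  apply Real.abs_le_sqrt
  calc (a * x + q) ^ 2 = a * (a * x ^ 2 + 2 * q * x) + q ^ 2 := by ring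
    _ ≤ a * c + q ^ 2 := by gcongr

theorem stmt_17_general (κ lam b : ℝ) (hκ : 0 < κ)
    (h : (lam - b) * (κ * lam - κ * b + 4 - κ) ≤ 4 * b)
    (u₁ : ℝ)
    (hu₁ : u₁ = ((4 - κ / 2) + Real.sqrt (4 * κ * lam + (4 - κ / 2) ^ 2)) / κ) :
    (κ * lam - κ * u₁ + 8 - 2 * κ < κ * b ∧ κ * b ≤ κ * lam + κ * u₁) ∧
      0 ≤ u₁ + lam - b := by
  set s := √(4 * κ * lam + (4 - κ / 2) ^ 2)
  have hκu₁ : κ * u₁ = (4 - κ / 2) + s := by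
    rw [hu₁, mul_div_cancel₀ _ hκ.ne']
  have hquad : κ * (lam - b) ^ 2 + 2 * (4 - κ / 2) * (lam - b) ≤ 4 * lam := by linarith
  have hsq : |κ * (lam - b) + (4 - κ / 2)| ≤ s := by
    simpa only [mul_left_comm κ 4 lam, ← mul_assoc] using
      abs_mul_add_le_sqrt_of_quadratic_le hκ hquad
  obtain ⟨hlower, hupper⟩ := abs_le.mp hsq
  refine ⟨⟨by linarith, by linarith⟩, ?_⟩
  exact nonneg_of_mul_nonneg_right (by linarith : 0 ≤ κ * (u₁ + lam - b)) hκ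

/-- The condition `4b ≥ (λ-b)(κλ - κb + 4 - κ)` implies
`κλ - κu₁(λ) + 8 - 2κ < κb ≤ κλ + κu₁(λ)` and `β := u₁(λ) + λ - b ≥ 0`, where
`u₁(λ) = ((4-κ/2)+√(4κλ+(4-κ/2)²))/κ` and `λ ≥ 0`. -/
theorem stmt_17 (κ lam b : ℝ) (hκ : 0 < κ) (hlam : 0 ≤ lam)
    (h : (lam - b) * (κ * lam - κ * b + 4 - κ) ≤ 4 * b)
    (u₁ : ℝ)
    (hu₁ : u₁ = ((4 - κ / 2) + Real.sqrt (4 * κ * lam + (4 - κ / 2) ^ 2)) / κ) :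
    (κ * lam - κ * u₁ + 8 - 2 * κ < κ * b ∧ κ * b ≤ κ * lam + κ * u₁) ∧
      0 ≤ u₁ + lam - b :=
  stmt_17_general κ lam b hκ h u₁ hu₁
end
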